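/- arXiv:math/0407382 — 6 statements merged into one kernel-verified Lean document; each statement's English description precedes it below -/
import Mathlib

section
/- Let E be a finite-dimensional vector space with decomposition E = F ⊕ F', with projections p, p' onto F, F' and inclusions i, i'. Let f be a linear automorphism of E such that p∘f∘i is an automorphism of F and p'∘f⁻¹∘i' is an automorphism of F'. Then (p∘f∘i)⁻¹ ∘ (p∘f∘i') = −(p∘f⁻¹∘i') ∘ (p'∘f⁻¹∘i')⁻¹ as linear maps from F' to F. -/
/-- Linear algebra lemma: for `E = F ⊕ F'` with projections `p, p'`, inclusions `i, i'`,
and an automorphism `f` with `p∘f∘i` and `p'∘f⁻¹∘i'` invertible,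
`(p∘f∘i)⁻¹ ∘ (p∘f∘i') = −(p∘f⁻¹∘i') ∘ (p'∘f⁻¹∘i')⁻¹`. -/
theorem stmt_0 {K E : Type*} [Field K] [AddCommGroup E] [Module K E]
    [FiniteDimensional K E]
    (F F' : Submodule K E) (hc : IsCompl F F')
    (f : E ≃ₗ[K] E)
    (A : F ≃ₗ[K] F)
    (hA : ∀ v : F, A v = Submodule.linearProjOfIsCompl F F' hc (f v))
    (B : F' ≃ₗ[K] F')
    (hB : ∀ w : F', B w = Submodule.linearProjOfIsCompl F' F hc.symm (f.symm w)) :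
    ∀ w : F',
      A.symm (Submodule.linearProjOfIsCompl F F' hc (f w))
        = - Submodule.linearProjOfIsCompl F F' hc (f.symm (B.symm w)) := by
  intro w
  set u := B.symm w with hu_def
  set a := Submodule.linearProjOfIsCompl F F' hc (f.symm u) with ha
  have hu : Submodule.linearProjOfIsCompl F' F hc.symm (f.symm u) = w := by
    rw [← hB u, hu_def, LinearEquiv.apply_symm_apply]
  have hdec : (a : E) + (w : E) = f.symm u := by
    rw [← hu, ha]
    exact Submodule.projection_add_projection_eq_self hc (f.symm u)
  have hfd : f (a : E) + f (w : E) = (u : E) := by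
    rw [← map_add, hdec, f.apply_symm_apply]
  have hproj : A a + Submodule.linearProjOfIsCompl F F' hc (f (w : E)) = 0 := by
    rw [hA a, ← map_add, hfd]
    exact Submodule.linearProjOfIsCompl_apply_right hc u
  have : Submodule.linearProjOfIsCompl F F' hc (f (w : E)) = A (-a) := by
    rw [map_neg, eq_neg_iff_add_eq_zero, add_comm]; exact hproj
  rw [this, LinearEquiv.symm_apply_apply]
end

section
/- Let g be a Lie algebra over a field of characteristic zero. For all x, u, v in g and natural numbers n ≥ 1, the directional derivative of y ↦ ad(y)^n at x in direction u, applied to v, equals ∑_{i=0}^{n−1} C(n, i+1) [ad(x)^i u, ad(x)^{n−i−1} v]. Equivalently, ∑_{i=0}^{n−1} ad(x)^i [u, ad(x)^{n−i−1} v] = ∑_{i=0}^{n−1} C(n, i+1) [ad(x)^i u, ad(x)^{n−i−1} v]. -/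
/-!
By the Leibniz rule, `D^i ⁅u, D^(n-i-1) v⁆ = ∑_{j ≤ i} C(i, j) ⁅D^j u, D^(n-j-1) v⁆` for any
derivation `D`. Exchanging the two sums, the coefficient of `⁅D^j u, D^(n-j-1) v⁆` becomes
`∑_{j ≤ i < n} C(i, j)`, which is `C(n, j+1)` by the hockey-stick identity.
-/

open Finset

theorem Nat.sum_Ico_choose (k n : ℕ) : ∑ i ∈ Ico k n, i.choose k = n.choose (k + 1) := by
  cases n with
  | zero => simp
  | succ m => rw [Ico_add_one_right_eq_Icc, Nat.sum_Icc_choose]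

namespace LieDerivation

variable {R L : Type*} [CommRing R] [LieRing L] [LieAlgebra R L]

theorem sum_iterate_apply_lie_iterate (D : LieDerivation R L L) (u v : L) (n : ℕ) :
    ∑ i ∈ range n, D^[i] ⁅u, D^[n - i - 1] v⁆
      = ∑ j ∈ range n, n.choose (j + 1) • ⁅D^[j] u, D^[n - j - 1] v⁆ :=
  calc ∑ i ∈ range n, D^[i] ⁅u, D^[n - i - 1] v⁆
      = ∑ i ∈ range n, ∑ j ∈ range (i + 1), i.choose j • ⁅D^[j] u, D^[n - j - 1] v⁆ := by
        refine sum_congr rfl fun i hi => ?_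
        rw [iterate_apply_lie']
        refine sum_congr rfl fun j hj => ?_
        rw [← Function.iterate_add_apply]
        congr 3
        have := mem_range.mp hi
        have := mem_range.mp hj
        omega
    _ = ∑ j ∈ range n, ∑ i ∈ Ico j n, i.choose j • ⁅D^[j] u, D^[n - j - 1] v⁆ :=
        sum_comm' fun i j => by simp only [mem_range, mem_Ico]; omega
    _ = ∑ j ∈ range n, n.choose (j + 1) • ⁅D^[j] u, D^[n - j - 1] v⁆ := by
        simp only [← sum_smul, Nat.sum_Ico_choose]

end LieDerivation

theorem stmt_3_general {K L : Type*} [Field K] [LieRing L] [LieAlgebra K L]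
    (x u v : L) (n : ℕ) :
    ∑ i ∈ Finset.range n,
        ((LieAlgebra.ad K L x) ^ i) ⁅u, ((LieAlgebra.ad K L x) ^ (n - i - 1)) v⁆
      = ∑ i ∈ Finset.range n,
          n.choose (i + 1) •
            ⁅((LieAlgebra.ad K L x) ^ i) u, ((LieAlgebra.ad K L x) ^ (n - i - 1)) v⁆ := by
  have ad_pow (m : ℕ) : ⇑(LieAlgebra.ad K L x ^ m) = (LieDerivation.ad K L x)^[m] := by
    rw [Module.End.coe_pow, ← LieDerivation.coe_ad_apply_eq_ad_apply]; rfl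
  simpa only [ad_pow] using (LieDerivation.ad K L x).sum_iterate_apply_lie_iterate u v n

/-- The directional derivative of `y ↦ ad(y)^n` at `x` in direction `u`, applied to `v`,
i.e. `∑_{i=0}^{n−1} ad(x)^i [u, ad(x)^{n−i−1} v]`, equals
`∑_{i=0}^{n−1} C(n, i+1) [ad(x)^i u, ad(x)^{n−i−1} v]`, for `n ≥ 1`. -/
theorem stmt_3 {K L : Type*} [Field K] [CharZero K] [LieRing L] [LieAlgebra K L]
    (x u v : L) (n : ℕ) (hn : 1 ≤ n) :
    ∑ i ∈ Finset.range n,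
        ((LieAlgebra.ad K L x) ^ i) ⁅u, ((LieAlgebra.ad K L x) ^ (n - i - 1)) v⁆
      = ∑ i ∈ Finset.range n,
          n.choose (i + 1) •
            ⁅((LieAlgebra.ad K L x) ^ i) u, ((LieAlgebra.ad K L x) ^ (n - i - 1)) v⁆ :=
  stmt_3_general x u v n
end

section
/- Let g be a Lie algebra, ϖ : g → A(g*, g) a Lie algebra 1-cocycle, φ ∈ ⋀³g, and t ∈ A(g*, g). Define ϖ^t_x = ϖ_x + ad_x t + t ad*_x, and define the bilinear expression Q(ϖ)(x; ξ,η,ζ) = ⟨ξ⊗η⊗ζ, ad_x^{(3)}φ⟩ − Cyc_{(ξ,η,ζ)}⟨ξ, ϖ_{ϖ_x η} ζ⟩ with φ^t the twisted associator ⟨ξ⊗η⊗ζ, φ^t⟩ = ⟨ξ⊗η⊗ζ, φ⟩ + Cyc_{(ξ,η,ζ)}⟨ζ, [tξ, tη] + ϖ_{tξ} η⟩. Then for all x ∈ g and ξ, η, ζ ∈ g*: ⟨ξ⊗η⊗ζ, ad^{(3)}_x φ⟩ − Cyc ⟨ξ, ϖ_{ϖ_x η} ζ⟩ = ⟨ξ⊗η⊗ζ,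 ad^{(3)}_x φ^t⟩ − Cyc ⟨ξ, ϖ^t_{ϖ^t_x η} ζ⟩. -/
/-!
Write `ϖ^t = ϖ + δt` with `(δt)_x = ad_x ∘ t + t ∘ ad*_x`. The `φ`-terms agree on both sides,
and the remaining terms are of degree one and two in `t`. In degree two, `ad^{(3)}_x` applied to
`Cyc ⟨ζ, [tξ, tη]⟩` is, by the Jacobi identity, the same form with one `t` replaced by `δt`,
which is the quadratic part of the double twist `ϖ^t_{ϖ^t_x η}`. In degree one, `ad^{(3)}_x`
applied to `Cyc ⟨ζ, ϖ_{tξ} η⟩` produces `ϖ_{[x, tη]}`, and the cocycle identity together with the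
skew-symmetry of `ϖ_x` turns it into the linear part of the double twist.
-/
section

variable {K L : Type*} [Field K] [LieRing L] [LieAlgebra K L]

/-- Twisted cocycle `ϖ^t_x = ϖ_x + ad_x ∘ t + t ∘ ad*_x`. -/
def twC (ϖ : L → Module.Dual K L →ₗ[K] L) (t : Module.Dual K L →ₗ[K] L) :
    L → Module.Dual K L →ₗ[K] L :=
  fun x => ϖ x + LieAlgebra.ad K L x ∘ₗ t + t ∘ₗ (LieAlgebra.ad K L x).dualMap

/-- Twisted associator pairing
`⟨ξ⊗η⊗ζ, φ^t⟩ = ⟨ξ⊗η⊗ζ, φ⟩ + Cyc_{(ξ,η,ζ)} ⟨ζ, [tξ,tη] + ϖ_{tξ} η⟩`. -/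
def twA (ϖ : L → Module.Dual K L →ₗ[K] L)
    (Φ : Module.Dual K L → Module.Dual K L → Module.Dual K L → K)
    (t : Module.Dual K L →ₗ[K] L) :
    Module.Dual K L → Module.Dual K L → Module.Dual K L → K :=
  fun ξ η ζ =>
    Φ ξ η ζ + (ζ ⁅t ξ, t η⁆ + ζ (ϖ (t ξ) η))
      + (ξ ⁅t η, t ζ⁆ + ξ (ϖ (t η) ζ))
      + (η ⁅t ζ, t ξ⁆ + η (ϖ (t ζ) ξ))

open LieAlgebra

local notation "L⋆" => Module.Dual K L

/-- `ad^{(3)}_x` on trilinear forms on `L*`; here `ad*_x` is the transpose `(ad x).dualMap`,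
not the coadjoint action. -/
def adDual3 (x : L) (F : L⋆ → L⋆ → L⋆ → K) : L⋆ → L⋆ → L⋆ → K :=
  fun ξ η ζ => F ((ad K L x).dualMap ξ) η ζ + F ξ ((ad K L x).dualMap η) ζ
    + F ξ η ((ad K L x).dualMap ζ)

def cycSum (F : L⋆ → L⋆ → L⋆ → K) : L⋆ → L⋆ → L⋆ → K :=
  fun ξ η ζ => F ξ η ζ + F η ζ ξ + F ζ ξ η

/-- The coboundary `δt` of the `0`-cochain `t`, so that `ϖ^t = ϖ + δt`. -/
def lieCoboundary (t : L⋆ →ₗ[K] L) (x : L) : L⋆ →ₗ[K] L :=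
  ad K L x ∘ₗ t + t ∘ₗ (ad K L x).dualMap

theorem dual_apply_lie_comm (α : L⋆) (u v : L) : α ⁅u, v⁆ = -α ⁅v, u⁆ := by
  rw [← map_neg, lie_skew]

theorem twC_eq_add_lieCoboundary (ϖ : L → L⋆ →ₗ[K] L) (t : L⋆ →ₗ[K] L) (x : L) :
    twC ϖ t x = ϖ x + lieCoboundary t x :=
  add_assoc _ _ _

theorem twA_eq_add_cycSum (ϖ : L → L⋆ →ₗ[K] L) (Φ : L⋆ → L⋆ → L⋆ → K) (t : L⋆ →ₗ[K] L) :
    twA ϖ Φ t = Φ + cycSum (fun ξ η ζ => ζ ⁅t ξ, t η⁆) + cycSum (fun ξ η ζ => ζ (ϖ (t ξ) η)) := by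
  funext ξ η ζ
  simp only [twA, cycSum, Pi.add_apply]
  ring

theorem adDual3_add (x : L) (F G : L⋆ → L⋆ → L⋆ → K) :
    adDual3 x (F + G) = adDual3 x F + adDual3 x G := by
  funext ξ η ζ
  simp only [adDual3, Pi.add_apply]
  ring

theorem apply_twC_apply (ϖ : L → L⋆ →ₗ[K] L) {t : L⋆ →ₗ[K] L}
    (ht : ∀ ξ η : L⋆, ξ (t η) = - η (t ξ)) (y : L) (ξ ζ : L⋆) :
    ξ (twC ϖ t y ζ) = ξ (ϖ y ζ) + ξ ⁅y, t ζ⁆ - ζ ⁅y, t ξ⁆ := by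
  simp only [twC, LinearMap.add_apply, LinearMap.comp_apply, ad_apply, map_add, ht ξ,
    LinearMap.dualMap_apply]
  ring

theorem apply_twC_twC_apply (ϖ : L →ₗ[K] L⋆ →ₗ[K] L) {t : L⋆ →ₗ[K] L}
    (ht : ∀ ξ η : L⋆, ξ (t η) = - η (t ξ)) (x : L) (ξ η ζ : L⋆) :
    ξ (twC ϖ t (twC ϖ t x η) ζ) = ξ (ϖ (ϖ x η) ζ)
      + (ξ (ϖ (lieCoboundary t x η) ζ) + ξ ⁅ϖ x η, t ζ⁆ - ζ ⁅ϖ x η, t ξ⁆)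
      + (ξ ⁅lieCoboundary t x η, t ζ⁆ - ζ ⁅lieCoboundary t x η, t ξ⁆) := by
  rw [apply_twC_apply _ ht, twC_eq_add_lieCoboundary]
  simp only [LinearMap.add_apply, map_add, add_lie]
  ring

/-- `ad_x` is a derivation of the bracket, so only the variation `δt` of `t` survives. -/
theorem adDual3_cycSum_bracket (t : L⋆ →ₗ[K] L) (x : L) :
    adDual3 x (cycSum fun ξ η ζ => ζ ⁅t ξ, t η⁆) =
      cycSum fun ξ η ζ => ξ ⁅lieCoboundary t x η, t ζ⁆ - ζ ⁅lieCoboundary t x η, t ξ⁆ := by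
  funext ξ η ζ
  have hJacobi : ∀ (α : L⋆) (u v : L), α ⁅x, ⁅u, v⁆⁆ = α ⁅⁅x, u⁆, v⁆ + α ⁅u, ⁅x, v⁆⁆ :=
    fun α u v => by rw [leibniz_lie, map_add]
  simp only [adDual3, cycSum, lieCoboundary, LinearMap.add_apply, LinearMap.comp_apply, ad_apply,
    LinearMap.dualMap_apply, add_lie, map_add]
  linear_combination hJacobi ξ (t η) (t ζ) + hJacobi η (t ζ) (t ξ) + hJacobi ζ (t ξ) (t η)
    + dual_apply_lie_comm ξ (t η) ⁅x, t ζ⁆ + dual_apply_lie_comm η (t ζ) ⁅x, t ξ⁆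
    + dual_apply_lie_comm ζ (t ξ) ⁅x, t η⁆
    + dual_apply_lie_comm ξ (t η) (t ((ad K L x).dualMap ζ))
    + dual_apply_lie_comm η (t ζ) (t ((ad K L x).dualMap ξ))
    + dual_apply_lie_comm ζ (t ξ) (t ((ad K L x).dualMap η))

theorem adDual3_cycSum_cocycle (ϖ : L →ₗ[K] L⋆ →ₗ[K] L)
    (hcoc : ∀ x y : L, ϖ ⁅x, y⁆ =
      ad K L x ∘ₗ ϖ y + ϖ y ∘ₗ (ad K L x).dualMap
        - ad K L y ∘ₗ ϖ x - ϖ x ∘ₗ (ad K L y).dualMap)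
    (hϖskew : ∀ (x : L) (ξ η : L⋆), ξ (ϖ x η) = - η (ϖ x ξ)) (t : L⋆ →ₗ[K] L) (x : L) :
    adDual3 x (cycSum fun ξ η ζ => ζ (ϖ (t ξ) η)) =
      cycSum fun ξ η ζ => ξ (ϖ (lieCoboundary t x η) ζ) + ξ ⁅ϖ x η, t ζ⁆ - ζ ⁅ϖ x η, t ξ⁆ := by
  funext ξ η ζ
  have hϖdual : ∀ (α γ : L⋆) (b : L), α (ϖ x ((ad K L b).dualMap γ)) = -γ ⁅b, ϖ x α⁆ :=
    fun α γ b => hϖskew x α _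
  simp only [adDual3, cycSum, lieCoboundary, hcoc, LinearMap.add_apply, LinearMap.sub_apply,
    LinearMap.comp_apply, hϖdual, ad_apply, LinearMap.dualMap_apply, map_add, map_sub]
  linear_combination dual_apply_lie_comm ξ (t η) (ϖ x ζ) + dual_apply_lie_comm η (t ζ) (ϖ x ξ)
    + dual_apply_lie_comm ζ (t ξ) (ϖ x η) - dual_apply_lie_comm ξ (t ζ) (ϖ x η)
    - dual_apply_lie_comm η (t ξ) (ϖ x ζ) - dual_apply_lie_comm ζ (t η) (ϖ x ξ)

theorem stmt_7_general
    (ϖ : L →ₗ[K] Module.Dual K L →ₗ[K] L)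
    (hcoc : ∀ x y : L, ϖ ⁅x, y⁆ =
      LieAlgebra.ad K L x ∘ₗ ϖ y + ϖ y ∘ₗ (LieAlgebra.ad K L x).dualMap
        - LieAlgebra.ad K L y ∘ₗ ϖ x - ϖ x ∘ₗ (LieAlgebra.ad K L y).dualMap)
    (hϖskew : ∀ (x : L) (ξ η : Module.Dual K L), ξ (ϖ x η) = - η (ϖ x ξ))
    (Φ : Module.Dual K L → Module.Dual K L → Module.Dual K L → K)
    (t : Module.Dual K L →ₗ[K] L)
    (ht : ∀ ξ η : Module.Dual K L, ξ (t η) = - η (t ξ)) :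
    ∀ (x : L) (ξ η ζ : Module.Dual K L),
      (Φ ((LieAlgebra.ad K L x).dualMap ξ) η ζ
        + Φ ξ ((LieAlgebra.ad K L x).dualMap η) ζ
        + Φ ξ η ((LieAlgebra.ad K L x).dualMap ζ))
      - (ξ (ϖ (ϖ x η) ζ) + η (ϖ (ϖ x ζ) ξ) + ζ (ϖ (ϖ x ξ) η))
      =
      (twA (fun a => ϖ a) Φ t ((LieAlgebra.ad K L x).dualMap ξ) η ζ
        + twA (fun a => ϖ a) Φ t ξ ((LieAlgebra.ad K L x).dualMap η) ζ
        + twA (fun a => ϖ a) Φ t ξ η ((LieAlgebra.ad K L x).dualMap ζ))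
      - (ξ (twC (fun a => ϖ a) t (twC (fun a => ϖ a) t x η) ζ)
          + η (twC (fun a => ϖ a) t (twC (fun a => ϖ a) t x ζ) ξ)
          + ζ (twC (fun a => ϖ a) t (twC (fun a => ϖ a) t x ξ) η)) := by
  intro x ξ η ζ
  change adDual3 x Φ ξ η ζ - cycSum (fun ξ η ζ => ξ (ϖ (ϖ x η) ζ)) ξ η ζ =
    adDual3 x (twA ϖ Φ t) ξ η ζ - cycSum (fun ξ η ζ => ξ (twC ϖ t (twC ϖ t x η) ζ)) ξ η ζ
  rw [twA_eq_add_cycSum, adDual3_add, adDual3_add, adDual3_cycSum_bracket,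
    adDual3_cycSum_cocycle ϖ hcoc hϖskew]
  simp only [cycSum, Pi.add_apply, apply_twC_twC_apply ϖ ht]
  ring

/-- The quantity `⟨ξ⊗η⊗ζ, ad^{(3)}_x φ⟩ − Cyc_{(ξ,η,ζ)} ⟨ξ, ϖ_{ϖ_x η} ζ⟩` is invariant
under twisting `(ϖ, φ) ↦ (ϖ^t, φ^t)`. -/
theorem stmt_7
    (ϖ : L →ₗ[K] Module.Dual K L →ₗ[K] L)
    (hcoc : ∀ x y : L, ϖ ⁅x, y⁆ =
      LieAlgebra.ad K L x ∘ₗ ϖ y + ϖ y ∘ₗ (LieAlgebra.ad K L x).dualMap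
        - LieAlgebra.ad K L y ∘ₗ ϖ x - ϖ x ∘ₗ (LieAlgebra.ad K L y).dualMap)
    (hϖskew : ∀ (x : L) (ξ η : Module.Dual K L), ξ (ϖ x η) = - η (ϖ x ξ))
    (Φ : Module.Dual K L → Module.Dual K L → Module.Dual K L → K)
    (hΦ1 : ∀ ξ η ζ, Φ ξ η ζ = - Φ η ξ ζ)
    (hΦ2 : ∀ ξ η ζ, Φ ξ η ζ = - Φ ξ ζ η)
    (t : Module.Dual K L →ₗ[K] L)
    (ht : ∀ ξ η : Module.Dual K L, ξ (t η) = - η (t ξ)) :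
    ∀ (x : L) (ξ η ζ : Module.Dual K L),
      (Φ ((LieAlgebra.ad K L x).dualMap ξ) η ζ
        + Φ ξ ((LieAlgebra.ad K L x).dualMap η) ζ
        + Φ ξ η ((LieAlgebra.ad K L x).dualMap ζ))
      - (ξ (ϖ (ϖ x η) ζ) + η (ϖ (ϖ x ζ) ξ) + ζ (ϖ (ϖ x ξ) η))
      =
      (twA (fun a => ϖ a) Φ t ((LieAlgebra.ad K L x).dualMap ξ) η ζ
        + twA (fun a => ϖ a) Φ t ξ ((LieAlgebra.ad K L x).dualMap η) ζ
        + twA (fun a => ϖ a) Φ t ξ η ((LieAlgebra.ad K L x).dualMap ζ))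
      - (ξ (twC (fun a => ϖ a) t (twC (fun a => ϖ a) t x η) ζ)
          + η (twC (fun a => ϖ a) t (twC (fun a => ϖ a) t x ζ) ξ)
          + ζ (twC (fun a => ϖ a) t (twC (fun a => ϖ a) t x ξ) η)) :=
  stmt_7_general ϖ hcoc hϖskew Φ t ht

end
end

section
/- Let G = (g, [,], ϖ, φ) be a Lie quasi-bialgebra with canonical double d = g ⊕ g*, and let t, t' ∈ A(g*, g) be two twists. Then the twist of G^t by t' equals G^{t+t'}, i.e., (ϖ^t)^{t'} = ϖ^{t+t'} and (φ^t)^{t'} = φ^{t+t'}. -/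
section

variable {K L : Type*} [Field K] [LieRing L] [LieAlgebra K L]

/-- Composition of twists: `(G^t)^{t'} = G^{t+t'}`, i.e. `(ϖ^t)^{t'} = ϖ^{t+t'}` and
`(φ^t)^{t'} = φ^{t+t'}`. -/
theorem stmt_8
    (ϖ : L →ₗ[K] Module.Dual K L →ₗ[K] L)
    (hcoc : ∀ x y : L, ϖ ⁅x, y⁆ =
      LieAlgebra.ad K L x ∘ₗ ϖ y + ϖ y ∘ₗ (LieAlgebra.ad K L x).dualMap
        - LieAlgebra.ad K L y ∘ₗ ϖ x - ϖ x ∘ₗ (LieAlgebra.ad K L y).dualMap)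
    (hϖskew : ∀ (x : L) (ξ η : Module.Dual K L), ξ (ϖ x η) = - η (ϖ x ξ))
    (Φ : Module.Dual K L → Module.Dual K L → Module.Dual K L → K)
    (hΦ1 : ∀ ξ η ζ, Φ ξ η ζ = - Φ η ξ ζ)
    (hΦ2 : ∀ ξ η ζ, Φ ξ η ζ = - Φ ξ ζ η)
    (t t' : Module.Dual K L →ₗ[K] L)
    (ht : ∀ ξ η : Module.Dual K L, ξ (t η) = - η (t ξ))
    (ht' : ∀ ξ η : Module.Dual K L, ξ (t' η) = - η (t' ξ)) :
    (∀ x : L, twC (twC (fun a => ϖ a) t) t' x = twC (fun a => ϖ a) (t + t') x)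
      ∧ (∀ ξ η ζ : Module.Dual K L,
          twA (twC (fun a => ϖ a) t) (twA (fun a => ϖ a) Φ t) t' ξ η ζ
            = twA (fun a => ϖ a) Φ (t + t') ξ η ζ) := by
  constructor
  · intro x
    simp only [twC, LinearMap.comp_add, LinearMap.add_comp]
    abel
  · intro ξ η ζ
    simp only [twA, twC, LinearMap.add_apply, LinearMap.comp_apply, LinearMap.map_add,
      map_add, LieAlgebra.ad_apply, LinearMap.dualMap_apply, lie_add, add_lie]
    rw [ht ζ ((LieAlgebra.ad K L (t' ξ)).dualMap η),
        ht ξ ((LieAlgebra.ad K L (t' η)).dualMap ζ),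
        ht η ((LieAlgebra.ad K L (t' ζ)).dualMap ξ)]
    simp only [LinearMap.dualMap_apply, LinearMap.comp_apply, LieAlgebra.ad_apply]
    have h1 : η ⁅t ζ, t' ξ⁆ = - η ⁅t' ξ, t ζ⁆ := by rw [← lie_skew, map_neg]
    have h2 : ζ ⁅t ξ, t' η⁆ = - ζ ⁅t' η, t ξ⁆ := by rw [← lie_skew, map_neg]
    have h3 : ξ ⁅t η, t' ζ⁆ = - ξ ⁅t' ζ, t η⁆ := by rw [← lie_skew, map_neg]
    ring_nf
    rw [h1, h2, h3]
    ring

end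
end

section
/- Let G = (g, [,], ϖ, φ) be a Lie quasi-bialgebra with canonical double d, D the connected simply connected Lie group with Lie algebra d, G the connected subgroup with Lie algebra g, and π : G → A(g*,g) the group 1-cocycle integrating ϖ. Then the formula Ad^D_g(x + ξ) = Ad_g x + π_g Ad*_{g⁻¹} ξ + Ad*_{g⁻¹} ξ defines an action of G on d: one has Ad^D_g ∘ Ad^D_{g'} = Ad^D_{gg'} for all g, g' ∈ G, and (d/dt)|_{t=0} Ad^D_{e^{tu}}(x+ξ) = ad^d_u(x+ξ) for all u, x ∈ g, ξ ∈ g*. -/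
/-! The action property is the cocycle identity for `π`, evaluated at `Ad*_{(gg')⁻¹} ξ`.
The derivative at `t = 0` is the product rule: since `π_1 = 0` (cocycle identity at
`g = h = 1`), the term `π_{γ t} Ad*_{(γ t)⁻¹} ξ` contributes only `ϖ_u ξ`. -/

section

variable {G E : Type*} [Group G]
  [NormedAddCommGroup E] [NormedSpace ℝ E] [FiniteDimensional ℝ E]

/-- The adjoint action of the group `G` on the double `d = g ⊕ g*`:
`Ad^D_g(x + ξ) = Ad_g x + π_g Ad*_{g⁻¹} ξ + Ad*_{g⁻¹} ξ`. -/
noncomputable def AdD (Ad : G →* (E ≃L[ℝ] E))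
    (π : G → (E →L[ℝ] ℝ) →L[ℝ] E) (g : G) (X : E × (E →L[ℝ] ℝ)) :
    E × (E →L[ℝ] ℝ) :=
  (Ad g X.1 + π g (X.2.comp (Ad g⁻¹).toContinuousLinearMap),
    X.2.comp (Ad g⁻¹).toContinuousLinearMap)

end

def IsAdCocycle {G E : Type*} [Monoid G] [NormedAddCommGroup E] [NormedSpace ℝ E]
    (Ad : G →* (E ≃L[ℝ] E)) (π : G → (E →L[ℝ] ℝ) →L[ℝ] E) : Prop :=
  ∀ (g h : G) (ξ : E →L[ℝ] ℝ),
    π (g * h) ξ = π g ξ + Ad g (π h (ξ.comp (Ad g).toContinuousLinearMap))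

section Monoid

variable {G E F : Type*} [Monoid G] [NormedAddCommGroup E] [NormedSpace ℝ E]
  [NormedAddCommGroup F] [NormedSpace ℝ F] (Ad : G →* (E ≃L[ℝ] E))

theorem comp_toContinuousLinearMap_map_one (ξ : E →L[ℝ] F) :
    ξ.comp (Ad 1).toContinuousLinearMap = ξ := by
  rw [map_one, ContinuousLinearEquiv.toContinuousLinearMap_one, ContinuousLinearMap.one_def,
    ContinuousLinearMap.comp_id]

theorem comp_toContinuousLinearMap_map_mul (g h : G) (ξ : E →L[ℝ] F) :
    ξ.comp (Ad (g * h)).toContinuousLinearMap =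
      (ξ.comp (Ad g).toContinuousLinearMap).comp (Ad h).toContinuousLinearMap := by
  rw [map_mul, ContinuousLinearEquiv.toContinuousLinearMap_mul, ContinuousLinearMap.mul_def,
    ContinuousLinearMap.comp_assoc]

theorem IsAdCocycle.map_one {π : G → (E →L[ℝ] ℝ) →L[ℝ] E} (hcoc : IsAdCocycle Ad π) :
    π 1 = 0 := by
  ext ξ
  have h := hcoc 1 1 ξ
  rw [one_mul, comp_toContinuousLinearMap_map_one, _root_.map_one] at h
  exact left_eq_add.mp h

end Monoid

namespace AdD

variable {G E : Type*} [Group G] [NormedAddCommGroup E] [NormedSpace ℝ E]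
  {Ad : G →* (E ≃L[ℝ] E)} {π : G → (E →L[ℝ] ℝ) →L[ℝ] E}

theorem map_mul (hcoc : IsAdCocycle Ad π) (g g' : G) (X : E × (E →L[ℝ] ℝ)) :
    AdD Ad π (g * g') X = AdD Ad π g (AdD Ad π g' X) := by
  obtain ⟨x, ξ⟩ := X
  have hdual : ξ.comp (Ad (g * g')⁻¹).toContinuousLinearMap =
      (ξ.comp (Ad g'⁻¹).toContinuousLinearMap).comp (Ad g⁻¹).toContinuousLinearMap := by
    rw [mul_inv_rev, comp_toContinuousLinearMap_map_mul]
  have hback : (ξ.comp (Ad (g * g')⁻¹).toContinuousLinearMap).comp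
      (Ad g).toContinuousLinearMap = ξ.comp (Ad g'⁻¹).toContinuousLinearMap := by
    rw [← comp_toContinuousLinearMap_map_mul, mul_inv_rev, inv_mul_cancel_right]
  have hAdx : Ad (g * g') x = Ad g (Ad g' x) := by
    rw [_root_.map_mul]
    rfl
  refine Prod.ext ?_ hdual
  simp only [AdD]
  rw [← hdual, hcoc, hback, hAdx, map_add]
  abel

theorem hasDerivAt_apply {γ : ℝ → G} (hγ : γ 0 = 1) (hπ1 : π 1 = 0)
    {a b : E →L[ℝ] E} (hAd : HasDerivAt (fun t => (Ad (γ t)).toContinuousLinearMap) a 0)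
    (hAdinv : HasDerivAt (fun t => (Ad (γ t)⁻¹).toContinuousLinearMap) b 0)
    {W : (E →L[ℝ] ℝ) →L[ℝ] E} (hπ : HasDerivAt (fun t => π (γ t)) W 0)
    (x : E) (ξ : E →L[ℝ] ℝ) :
    HasDerivAt (fun t => AdD Ad π (γ t) (x, ξ)) (a x + W ξ, ξ.comp b) 0 := by
  have hdual : HasDerivAt (fun t => ξ.comp (Ad (γ t)⁻¹).toContinuousLinearMap)
      (ξ.comp b) 0 := by
    simpa using (hasDerivAt_const (0 : ℝ) ξ).clm_comp hAdinv
  have hAdx : HasDerivAt (fun t => Ad (γ t) x) (a x) 0 := by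
    simpa using hAd.clm_apply (hasDerivAt_const (0 : ℝ) x)
  have hπξ : HasDerivAt (fun t => π (γ t) (ξ.comp (Ad (γ t)⁻¹).toContinuousLinearMap))
      (W ξ) 0 := by
    simpa [hγ, hπ1, ContinuousLinearMap.one_def] using hπ.clm_apply hdual
  exact (hAdx.add hπξ).prodMk hdual

end AdD

section

variable {G E : Type*} [Group G]
  [NormedAddCommGroup E] [NormedSpace ℝ E] [FiniteDimensional ℝ E]

theorem stmt_16_general
    (lb : E →ₗ[ℝ] E →ₗ[ℝ] E)
    (Ad : G →* (E ≃L[ℝ] E))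
    (π : G → (E →L[ℝ] ℝ) →L[ℝ] E)
    (hcoc : ∀ (g h : G) (ξ : E →L[ℝ] ℝ),
      π (g * h) ξ = π g ξ + Ad g (π h (ξ.comp (Ad g).toContinuousLinearMap)))
    -- a one-parameter subgroup `t ↦ e^{tu}` in the direction `u`:
    (γ : ℝ → G) (hγ0 : γ 0 = 1) (u : E)
    (hAd : HasDerivAt (fun t => (Ad (γ t)).toContinuousLinearMap)
      (LinearMap.toContinuousLinearMap (lb u)) 0)
    (hAdinv : HasDerivAt (fun t => (Ad (γ t)⁻¹).toContinuousLinearMap)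
      (- LinearMap.toContinuousLinearMap (lb u)) 0)
    -- `T₁π = ϖ` in the direction `u`, `W = ϖ_u`:
    (W : (E →L[ℝ] ℝ) →L[ℝ] E)
    (hπ : HasDerivAt (fun t => π (γ t)) W 0) :
    (∀ (g g' : G) (X : E × (E →L[ℝ] ℝ)),
        AdD Ad π (g * g') X = AdD Ad π g (AdD Ad π g' X))
      ∧ (∀ (x : E) (ξ : E →L[ℝ] ℝ),
          HasDerivAt (fun t => AdD Ad π (γ t) (x, ξ))
            (lb u x + W ξ, - ξ.comp (LinearMap.toContinuousLinearMap (lb u))) 0) := by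
  have hcocycle : IsAdCocycle Ad π := hcoc
  refine ⟨AdD.map_mul hcocycle, fun x ξ => ?_⟩
  rw [← ContinuousLinearMap.comp_neg]
  exact AdD.hasDerivAt_apply hγ0 hcocycle.map_one hAd hAdinv hπ x ξ

/-- The formula `Ad^D_g(x+ξ) = Ad_g x + π_g Ad*_{g⁻¹}ξ + Ad*_{g⁻¹}ξ` defines an action
of `G` on `d = g ⊕ g*`, whose infinitesimal generator in the direction `u ∈ g` is the
adjoint action `ad^d_u(x+ξ) = ([u,x] + ϖ_u ξ, −ad*_u ξ)` of the double. Here the Lie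
bracket of `g` is given as a bilinear map `lb` (with `ad_u = lb u`). -/
theorem stmt_16
    (lb : E →ₗ[ℝ] E →ₗ[ℝ] E)
    (hlb_alt : ∀ x : E, lb x x = 0)
    (hlb_jac : ∀ x y z : E, lb x (lb y z) = lb (lb x y) z + lb y (lb x z))
    (Ad : G →* (E ≃L[ℝ] E))
    (π : G → (E →L[ℝ] ℝ) →L[ℝ] E)
    (hskew : ∀ (g : G) (ξ η : E →L[ℝ] ℝ), ξ (π g η) = - η (π g ξ))
    (hcoc : ∀ (g h : G) (ξ : E →L[ℝ] ℝ),
      π (g * h) ξ = π g ξ + Ad g (π h (ξ.comp (Ad g).toContinuousLinearMap)))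
    -- a one-parameter subgroup `t ↦ e^{tu}` in the direction `u`:
    (γ : ℝ → G) (hγ0 : γ 0 = 1) (u : E)
    (hAd : HasDerivAt (fun t => (Ad (γ t)).toContinuousLinearMap)
      (LinearMap.toContinuousLinearMap (lb u)) 0)
    (hAdinv : HasDerivAt (fun t => (Ad (γ t)⁻¹).toContinuousLinearMap)
      (- LinearMap.toContinuousLinearMap (lb u)) 0)
    -- `T₁π = ϖ` in the direction `u`, `W = ϖ_u`:
    (W : (E →L[ℝ] ℝ) →L[ℝ] E)
    (hπ : HasDerivAt (fun t => π (γ t)) W 0) :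
    (∀ (g g' : G) (X : E × (E →L[ℝ] ℝ)),
        AdD Ad π (g * g') X = AdD Ad π g (AdD Ad π g' X))
      ∧ (∀ (x : E) (ξ : E →L[ℝ] ℝ),
          HasDerivAt (fun t => AdD Ad π (γ t) (x, ξ))
            (lb u x + W ξ, - ξ.comp (LinearMap.toContinuousLinearMap (lb u))) 0) :=
  stmt_16_general lb Ad π hcoc γ hγ0 u hAd hAdinv W hπ

end
end

section
/- Let g be a Lie algebra over ℝ or ℂ with elements written via ad, and p an element such that all expressions converge (or work with formal power series in ad(sp)). Then the 'cosh/sinh derivative' identities hold: for all α, β ∈ l* (with s : l* → g* as above, working in the double d), (i) d_p[sinh(ad_{s·})/ad_{s·}](α)(sβ) − d_p[sinh(ad_{s·})/ad_{s·}](β)(sα) = [(cosh(ad_{sp})−1)/ad_{sp} · sα, sinh(ad_{sp})/ad_{sp} · sβ] + [sinh(ad_{sp})/ad_{sp} · sα, (cosh(ad_{sp})−1)/ad_{sp} · sβ]; and (ii) d_p[(cosh(ad_{s·})−1)/ad_{s·}](α)(sβ) − d_p[(cosh(ad_{s·})−1)/ad_{s·}](β)(sα) = [sinh(ad_{sp})/ad_{sp}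 · sα, sinh(ad_{sp})/ad_{sp} · sβ] + [(cosh(ad_{sp})−1)/ad_{sp} · sα, (cosh(ad_{sp})−1)/ad_{sp} · sβ]. -/
/-!
Write `e_k w = ad_x^k w / (k+1)!`, so that `∑ₖ e_k = (exp(ad_x) - 1)/ad_x` and its even and odd
parts are `sinh(ad_x)/ad_x` and `(cosh(ad_x) - 1)/ad_x`. The degree `m + 1` term of the termwise
derivative equals `∑_{i+j=m} (j+1)/(m+2) • [e_i u, e_j v]`. Skew-symmetrizing and using
antisymmetry of the bracket replaces the weight by `(j+1)/(m+2) + (i+1)/(m+2) = 1`, leaving the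
degree `m` coefficient `∑_{i+j=m} [e_i u, e_j v]` of the Cauchy product of the two series.
Sorting the pairs `(i, j)` by parity splits that Cauchy product into the four brackets of
sinh/cosh operators: `i + j` odd gives the first identity, `i + j` even the second.
-/

section

variable {D : Type*} [NormedAddCommGroup D] [NormedSpace ℝ D] [FiniteDimensional ℝ D]

/-- `(sinh(ad_x)/ad_x) v = ∑_{n≥0} ad_x^{2n} v /(2n+1)!`, the bracket being given by
the bilinear map `lb` (so `ad_x = lb x`). -/
noncomputable def shOp (lb : D →ₗ[ℝ] D →ₗ[ℝ] D) (x v : D) : D :=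
  ∑' n : ℕ, (((2 * n + 1).factorial : ℝ))⁻¹ • ((lb x ^ (2 * n)) v)

/-- `((cosh(ad_x)−1)/ad_x) v = ∑_{n≥0} ad_x^{2n+1} v /(2n+2)!`. -/
noncomputable def chOp (lb : D →ₗ[ℝ] D →ₗ[ℝ] D) (x v : D) : D :=
  ∑' n : ℕ, (((2 * n + 2).factorial : ℝ))⁻¹ • ((lb x ^ (2 * n + 1)) v)

/-- Termwise directional derivative of `p ↦ (sinh(ad_{sp})/ad_{sp}) (sβ)` at `p` in the
direction `α`, computed by `d_x ad^n(u)v = ∑_{i=0}^{n−1} C(n,i+1)[ad_x^i u, ad_x^{n−i−1} v]`. -/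
noncomputable def dSh {V : Type*} [AddCommGroup V] [Module ℝ V]
    (lb : D →ₗ[ℝ] D →ₗ[ℝ] D) (s : V →ₗ[ℝ] D) (p α β : V) : D :=
  ∑' n : ℕ, (((2 * n + 1).factorial : ℝ))⁻¹ •
    ∑ i ∈ Finset.range (2 * n),
      ((2 * n).choose (i + 1) : ℝ) •
        lb ((lb (s p) ^ i) (s α)) ((lb (s p) ^ (2 * n - 1 - i)) (s β))

/-- Termwise directional derivative of `p ↦ ((cosh(ad_{sp})−1)/ad_{sp}) (sβ)` at `p` in
the direction `α`. -/
noncomputable def dCh {V : Type*} [AddCommGroup V] [Module ℝ V]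
    (lb : D →ₗ[ℝ] D →ₗ[ℝ] D) (s : V →ₗ[ℝ] D) (p α β : V) : D :=
  ∑' n : ℕ, (((2 * n + 2).factorial : ℝ))⁻¹ •
    ∑ i ∈ Finset.range (2 * n + 1),
      ((2 * n + 1).choose (i + 1) : ℝ) •
        lb ((lb (s p) ^ i) (s α)) ((lb (s p) ^ (2 * n - i)) (s β))

end

open Finset
open scoped Nat

theorem sum_antidiagonal_two_mul_add_one {M : Type*} [AddCommMonoid M] (n : ℕ)
    (f : ℕ × ℕ → M) :
    ∑ p ∈ antidiagonal (2 * n + 1), f p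
      = ∑ p ∈ antidiagonal n, (f (2 * p.1 + 1, 2 * p.2) + f (2 * p.1, 2 * p.2 + 1)) := by
  induction n generalizing f with
  | zero => simp [Nat.sum_antidiagonal_succ, add_comm]
  | succ n ih =>
    rw [show 2 * (n + 1) + 1 = 2 * n + 1 + 1 + 1 by ring, Nat.sum_antidiagonal_succ,
      Nat.sum_antidiagonal_succ, ih, Nat.sum_antidiagonal_succ]
    ring_nf
    abel

theorem sum_antidiagonal_two_mul_add_two {M : Type*} [AddCommMonoid M] (n : ℕ)
    (f : ℕ × ℕ → M) :
    ∑ p ∈ antidiagonal (2 * n + 2), f p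
      = ∑ p ∈ antidiagonal (n + 1), f (2 * p.1, 2 * p.2)
        + ∑ p ∈ antidiagonal n, f (2 * p.1 + 1, 2 * p.2 + 1) := by
  rw [Nat.sum_antidiagonal_succ, sum_antidiagonal_two_mul_add_one, Nat.sum_antidiagonal_succ,
    sum_add_distrib, ← add_assoc]
  ring_nf

theorem two_mul_injective : Function.Injective (2 * · : ℕ → ℕ) :=
  mul_right_injective₀ two_ne_zero

theorem two_mul_add_one_injective : Function.Injective (2 * · + 1 : ℕ → ℕ) :=
  fun _ _ h => by simpa using h

theorem inv_factorial_mul_choose {𝕜 : Type*} [Field 𝕜] [CharZero 𝕜] (i j : ℕ) :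
    (((i + j + 2)! : 𝕜))⁻¹ * ((i + j + 1).choose (i + 1) : 𝕜)
      = (j + 1 : 𝕜) / (i + j + 2) * (((i + 1)! : 𝕜)⁻¹ * ((j + 1)! : 𝕜)⁻¹) := by
  have h := Nat.choose_mul_factorial_mul_factorial (n := i + j + 1) (k := i + 1) (by omega)
  rw [show i + j + 1 - (i + 1) = j by omega] at h
  have hfac : ((i + j + 1)! : 𝕜) = (i + j + 1).choose (i + 1) * (i + 1)! * j ! := by
    exact_mod_cast h.symm
  have hchoose : ((i + j + 1).choose (i + 1) : 𝕜) ≠ 0 := by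
    exact_mod_cast (Nat.choose_pos (by omega)).ne'
  rw [Nat.factorial_succ (i + j + 1), Nat.factorial_succ j]
  push_cast
  rw [hfac]
  field_simp
  ring

theorem ContinuousLinearMap.hasSum_sum_antidiagonal {𝕜 E F G : Type*}
    [NontriviallyNormedField 𝕜]
    [NormedAddCommGroup E] [NormedSpace 𝕜 E] [CompleteSpace E]
    [NormedAddCommGroup F] [NormedSpace 𝕜 F] [CompleteSpace F]
    [NormedAddCommGroup G] [NormedSpace 𝕜 G] [CompleteSpace G]
    (B : E →L[𝕜] F →L[𝕜] G) {a : ℕ → E} {b : ℕ → F}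
    (ha : Summable (‖a ·‖)) (hb : Summable (‖b ·‖)) :
    HasSum (fun n => ∑ p ∈ antidiagonal n, B (a p.1) (b p.2)) (B (∑' n, a n) (∑' n, b n)) := by
  have hsum : Summable fun q : ℕ × ℕ => B (a q.1) (b q.2) :=
    .of_norm_bounded
      ((ha.mul_of_nonneg hb (fun _ => norm_nonneg _) fun _ => norm_nonneg _).mul_left ‖B‖)
      fun q => (B.le_opNorm₂ _ _).trans_eq (mul_assoc _ _ _)
  have hprod : HasSum (fun q : ℕ × ℕ => B (a q.1) (b q.2)) (B (∑' n, a n) (∑' n, b n)) := by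
    have hfib := hsum.hasSum.prod_fiberwise fun i => (B (a i)).hasSum hb.of_norm.hasSum
    exact (ha.of_norm.hasSum.mapL (B.flip (∑' n, b n))).unique hfib ▸ hsum.hasSum
  rw [← HasAntidiagonal.sigmaAntidiagonalEquivProd.hasSum_iff] at hprod
  refine hprod.sigma fun n => ?_
  rw [← Finset.sum_coe_sort]
  exact hasSum_fintype _

theorem LinearMap.norm_pow_apply_le {𝕜 E : Type*} [NormedField 𝕜] [SeminormedAddCommGroup E]
    [NormedSpace 𝕜 E] {f : E →ₗ[𝕜] E} {c : ℝ} (hc : 0 ≤ c) (hf : ∀ y, ‖f y‖ ≤ c * ‖y‖)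
    (k : ℕ) (y : E) : ‖(f ^ k) y‖ ≤ c ^ k * ‖y‖ := by
  induction k with
  | zero => simp
  | succ k ih =>
    rw [pow_succ', Module.End.mul_apply, pow_succ', mul_assoc]
    exact (hf _).trans (mul_le_mul_of_nonneg_left ih hc)

section FiniteDimensionalBilinear

variable {𝕜 E F G : Type*} [NontriviallyNormedField 𝕜] [CompleteSpace 𝕜]
  [NormedAddCommGroup E] [NormedSpace 𝕜 E] [FiniteDimensional 𝕜 E]
  [NormedAddCommGroup F] [NormedSpace 𝕜 F] [FiniteDimensional 𝕜 F]
  [NormedAddCommGroup G] [NormedSpace 𝕜 G]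

noncomputable def LinearMap.toContinuousLinearMap₂ (f : E →ₗ[𝕜] F →ₗ[𝕜] G) :
    E →L[𝕜] F →L[𝕜] G :=
  LinearMap.toContinuousLinearMap (LinearMap.toContinuousLinearMap.toLinearMap ∘ₗ f)

theorem LinearMap.hasSum_sum_antidiagonal [CompleteSpace G] (f : E →ₗ[𝕜] F →ₗ[𝕜] G)
    {a : ℕ → E} {b : ℕ → F} (ha : Summable (‖a ·‖)) (hb : Summable (‖b ·‖)) :
    HasSum (fun n => ∑ p ∈ antidiagonal n, f (a p.1) (b p.2)) (f (∑' n, a n) (∑' n, b n)) :=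
  have := FiniteDimensional.complete 𝕜 E
  have := FiniteDimensional.complete 𝕜 F
  f.toContinuousLinearMap₂.hasSum_sum_antidiagonal ha hb

end FiniteDimensionalBilinear

section AdExpSeries

variable {𝕜 D : Type*} [Field 𝕜] [CharZero 𝕜] [AddCommGroup D] [Module 𝕜 D]
  (lb : D →ₗ[𝕜] D →ₗ[𝕜] D) (x : D)

def adExpTerm (k : ℕ) (w : D) : D :=
  ((k + 1)! : 𝕜)⁻¹ • (lb x ^ k) w

def adExpDerivTerm (m : ℕ) (u v : D) : D :=
  ((m + 1)! : 𝕜)⁻¹ • ∑ i ∈ range m,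
    (m.choose (i + 1) : 𝕜) • lb ((lb x ^ i) u) ((lb x ^ (m - 1 - i)) v)

theorem adExpDerivTerm_zero (u v : D) : adExpDerivTerm lb x 0 u v = 0 := by
  simp [adExpDerivTerm]

theorem adExpDerivTerm_succ (m : ℕ) (u v : D) :
    adExpDerivTerm lb x (m + 1) u v = ∑ p ∈ antidiagonal m,
      ((p.2 + 1 : 𝕜) / (m + 2)) • lb (adExpTerm lb x p.1 u) (adExpTerm lb x p.2 v) := by
  rw [adExpDerivTerm, Nat.add_sub_cancel, ← Nat.sum_antidiagonal_eq_sum_range_succ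
    (fun i j => (((m + 1).choose (i + 1) : ℕ) : 𝕜) • lb ((lb x ^ i) u) ((lb x ^ j) v)), smul_sum]
  refine sum_congr rfl fun ⟨i, j⟩ hij => ?_
  obtain rfl : i + j = m := by simpa using hij
  simp only [adExpTerm, map_smul, LinearMap.smul_apply, smul_smul]
  congr 1
  push_cast
  rw [show i + j + 1 + 1 = i + j + 2 from rfl, inv_factorial_mul_choose]
  ring

variable {lb} in
theorem adExpDerivTerm_succ_sub_swap (hlb : lb.IsAlt) (m : ℕ) (u v : D) :
    adExpDerivTerm lb x (m + 1) u v - adExpDerivTerm lb x (m + 1) v u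
      = ∑ p ∈ antidiagonal m, lb (adExpTerm lb x p.1 u) (adExpTerm lb x p.2 v) := by
  rw [adExpDerivTerm_succ, adExpDerivTerm_succ]
  nth_rw 2 [← Nat.sum_antidiagonal_swap]
  rw [← sum_sub_distrib]
  refine sum_congr rfl fun ⟨i, j⟩ hij => ?_
  obtain rfl : i + j = m := by simpa using hij
  rw [Prod.fst_swap, Prod.snd_swap, ← hlb.neg (adExpTerm lb x i u), smul_neg, sub_neg_eq_add,
    ← add_smul]
  convert one_smul 𝕜 _ using 2
  have : (i + j + 2 : 𝕜) ≠ 0 := by exact_mod_cast (i + j + 1).succ_ne_zero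
  push_cast
  field_simp
  ring

end AdExpSeries

section SinhCosh

variable {D : Type*} [NormedAddCommGroup D] [NormedSpace ℝ D] (lb : D →ₗ[ℝ] D →ₗ[ℝ] D) (x : D)

theorem shOp_eq_tsum (w : D) : shOp lb x w = ∑' n, adExpTerm lb x (2 * n) w :=
  rfl

theorem chOp_eq_tsum (w : D) : chOp lb x w = ∑' n, adExpTerm lb x (2 * n + 1) w :=
  rfl

theorem dSh_eq_tsum {V : Type*} [AddCommGroup V] [Module ℝ V] (s : V →ₗ[ℝ] D) (p α β : V) :
    dSh lb s p α β = ∑' n, adExpDerivTerm lb (s p) (2 * n) (s α) (s β) :=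
  rfl

theorem dCh_eq_tsum {V : Type*} [AddCommGroup V] [Module ℝ V] (s : V →ₗ[ℝ] D) (p α β : V) :
    dCh lb s p α β = ∑' n, adExpDerivTerm lb (s p) (2 * n + 1) (s α) (s β) :=
  rfl

variable [FiniteDimensional ℝ D]

theorem summable_norm_adExpTerm (w : D) : Summable fun k => ‖adExpTerm lb x k w‖ := by
  set A := LinearMap.toContinuousLinearMap (lb x)
  refine .of_nonneg_of_le (fun _ => norm_nonneg _) (fun k => ?_)
    ((Real.summable_pow_div_factorial ‖A‖).mul_right ‖w‖)
  rw [adExpTerm, norm_smul, norm_inv, Real.norm_natCast, div_mul_eq_mul_div, inv_mul_eq_div]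
  gcongr
  · exact LinearMap.norm_pow_apply_le (norm_nonneg _) A.le_opNorm k w
  · omega

theorem summable_adExpDerivTerm (u v : D) : Summable fun m => adExpDerivTerm lb x m u v := by
  have hu := summable_norm_adExpTerm lb x u
  have hv := summable_norm_adExpTerm lb x v
  set B := lb.toContinuousLinearMap₂
  rw [← summable_nat_add_iff 1]
  refine .of_norm_bounded ((summable_sum_mul_antidiagonal_of_summable_norm'
    (by simpa using hu) hu (by simpa using hv) hv).mul_left ‖B‖) fun m => ?_
  rw [adExpDerivTerm_succ, mul_sum]
  refine (norm_sum_le _ _).trans (sum_le_sum fun ⟨i, j⟩ hij => ?_)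
  obtain rfl : i + j = m := by simpa using hij
  have hweight : ‖((j + 1 : ℝ) / ((i + j : ℕ) + 2))‖ ≤ 1 := by
    rw [Real.norm_of_nonneg (by positivity), div_le_one (by positivity)]
    push_cast
    linarith [(i.cast_nonneg : (0 : ℝ) ≤ i)]
  rw [norm_smul]
  exact (mul_le_of_le_one_left (norm_nonneg _) hweight).trans
    ((B.le_opNorm₂ _ _).trans_eq (mul_assoc _ _ _))

variable {lb}

theorem hasSum_adExpDerivTerm_two_mul_sub_swap (hlb : lb.IsAlt) (u v : D) :
    HasSum (fun n => adExpDerivTerm lb x (2 * n) u v - adExpDerivTerm lb x (2 * n) v u)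
      (lb (chOp lb x u) (shOp lb x v) + lb (shOp lb x u) (chOp lb x v)) := by
  have hu := summable_norm_adExpTerm lb x u
  have hv := summable_norm_adExpTerm lb x v
  have hoe := lb.hasSum_sum_antidiagonal (hu.comp_injective two_mul_add_one_injective)
    (hv.comp_injective two_mul_injective)
  have heo := lb.hasSum_sum_antidiagonal (hu.comp_injective two_mul_injective)
    (hv.comp_injective two_mul_add_one_injective)
  rw [← hasSum_nat_add_iff' 1]
  simp only [range_one, sum_singleton, mul_zero, adExpDerivTerm_zero, sub_zero, mul_add, mul_one,
    adExpDerivTerm_succ_sub_swap x hlb, sum_antidiagonal_two_mul_add_one, sum_add_distrib]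
  rw [shOp_eq_tsum, shOp_eq_tsum, chOp_eq_tsum, chOp_eq_tsum]
  exact hoe.add heo

theorem hasSum_adExpDerivTerm_two_mul_add_one_sub_swap (hlb : lb.IsAlt) (u v : D) :
    HasSum (fun n => adExpDerivTerm lb x (2 * n + 1) u v - adExpDerivTerm lb x (2 * n + 1) v u)
      (lb (shOp lb x u) (shOp lb x v) + lb (chOp lb x u) (chOp lb x v)) := by
  have hu := summable_norm_adExpTerm lb x u
  have hv := summable_norm_adExpTerm lb x v
  have hee := lb.hasSum_sum_antidiagonal (hu.comp_injective two_mul_injective)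
    (hv.comp_injective two_mul_injective)
  have hoo := lb.hasSum_sum_antidiagonal (hu.comp_injective two_mul_add_one_injective)
    (hv.comp_injective two_mul_add_one_injective)
  rw [← hasSum_nat_add_iff' 1] at hee ⊢
  simp only [adExpDerivTerm_succ_sub_swap x hlb, range_one, sum_singleton, mul_add, mul_one,
    mul_zero, sum_antidiagonal_two_mul_add_two] at hee ⊢
  rw [shOp_eq_tsum, shOp_eq_tsum, chOp_eq_tsum, chOp_eq_tsum]
  convert hee.add hoo using 1
  abel

end SinhCosh

section

variable {D : Type*} [NormedAddCommGroup D] [NormedSpace ℝ D] [FiniteDimensional ℝ D]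

theorem stmt_19_general {V : Type*} [AddCommGroup V] [Module ℝ V]
    (lb : D →ₗ[ℝ] D →ₗ[ℝ] D)
    (hlb_alt : ∀ x : D, lb x x = 0)
    (s : V →ₗ[ℝ] D) (p α β : V) :
    (dSh lb s p α β - dSh lb s p β α
        = lb (chOp lb (s p) (s α)) (shOp lb (s p) (s β))
          + lb (shOp lb (s p) (s α)) (chOp lb (s p) (s β)))
      ∧ (dCh lb s p α β - dCh lb s p β α
          = lb (shOp lb (s p) (s α)) (shOp lb (s p) (s β))
            + lb (chOp lb (s p) (s α)) (chOp lb (s p) (s β))) := by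
  have hsum := summable_adExpDerivTerm lb (s p)
  constructor
  · rw [dSh_eq_tsum, dSh_eq_tsum]
    exact (((hsum _ _).comp_injective two_mul_injective).hasSum.sub
      ((hsum _ _).comp_injective two_mul_injective).hasSum).unique
        (hasSum_adExpDerivTerm_two_mul_sub_swap _ hlb_alt _ _)
  · rw [dCh_eq_tsum, dCh_eq_tsum]
    exact (((hsum _ _).comp_injective two_mul_add_one_injective).hasSum.sub
      ((hsum _ _).comp_injective two_mul_add_one_injective).hasSum).unique
        (hasSum_adExpDerivTerm_two_mul_add_one_sub_swap _ hlb_alt _ _)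

/-- The cosh/sinh derivative identities (Lemma on `d sinh(ad)/ad` and
`d (cosh(ad)−1)/ad`): the skew-symmetrized directional derivatives of
`p ↦ (sinh(ad_{sp})/ad_{sp}) sβ` and `p ↦ ((cosh(ad_{sp})−1)/ad_{sp}) sβ` are given by
brackets of the sinh/cosh operators. -/
theorem stmt_19 {V : Type*} [AddCommGroup V] [Module ℝ V]
    (lb : D →ₗ[ℝ] D →ₗ[ℝ] D)
    (hlb_alt : ∀ x : D, lb x x = 0)
    (hlb_jac : ∀ x y z : D, lb x (lb y z) = lb (lb x y) z + lb y (lb x z))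
    (s : V →ₗ[ℝ] D) (p α β : V) :
    (dSh lb s p α β - dSh lb s p β α
        = lb (chOp lb (s p) (s α)) (shOp lb (s p) (s β))
          + lb (shOp lb (s p) (s α)) (chOp lb (s p) (s β)))
      ∧ (dCh lb s p α β - dCh lb s p β α
          = lb (shOp lb (s p) (s α)) (shOp lb (s p) (s β))
            + lb (chOp lb (s p) (s α)) (chOp lb (s p) (s β))) :=
  stmt_19_general lb hlb_alt s p α β

end
end
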